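/- arXiv:2412.04389 — 3 statements merged into one kernel-verified Lean document; each statement's English description precedes it below -/
import Mathlib

section
/- For any hypergraph H, b_L(H) = |V(H)| - m(H), where m(H) is the maximum cardinality of a C-matching in the incidence graph of H. -/
open scoped Classical

section Defs

variable {V E : Type*}

/-- The set of vertices eventually burned when `B` is initially burned:
a vertex burns if it is initially burned, or if some hyperedge contains it and
all other vertices of that hyperedge are burned. -/
inductive Burns (edges : E → Finset V) (B : Set V) : V → Prop
  | init (v : V) : v ∈ B → Burns edges B v
  | spread (h : E) (v : V) : v ∈ edges h →
      (∀ u, u ∈ edges h → u ≠ v → Burns edges B u) → Burns edges B v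

/-- `B` is a lazy burning set if every vertex eventually burns. -/
def IsLazyBurningSet (edges : E → Finset V) (B : Set V) : Prop :=
  ∀ v, Burns edges B v

/-- The lazy burning number: minimum size of a lazy burning set. -/
noncomputable def lazyBurningNumber [Fintype V] (edges : E → Finset V) : ℕ :=
  sInf {n | ∃ B : Finset V, B.card = n ∧ IsLazyBurningSet edges ↑B}

/-- A `C`-matching in the incidence graph: a list of incidence pairs `(vᵢ, hᵢ)`
with the `vᵢ` distinct, such that `hᵢ` contains none of the later vertices. -/
def IsCMatching (edges : E → Finset V) (L : List (V × E)) : Prop :=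
  (∀ p ∈ L, p.1 ∈ edges p.2) ∧ (L.map Prod.fst).Nodup ∧
  ∀ i j (hi : i < L.length) (hj : j < L.length), i < j →
    (L.get ⟨j, hj⟩).1 ∉ edges (L.get ⟨i, hi⟩).2

/-- `m(H)`: maximum cardinality (length) of a `C`-matching. -/
noncomputable def maxCMatching (edges : E → Finset V) : ℕ :=
  sSup {k | ∃ L : List (V × E), IsCMatching edges L ∧ L.length = k}

/-- A chronological list of lazy burnings starting from `B0`: a list of pairs
`(hᵢ, vᵢ)` with `vᵢ ∈ hᵢ` and `hᵢ \ {vᵢ} ⊆ B_{i-1} = B0 ∪ {v₁, …, v_{i-1}}`. -/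
def IsChronList (edges : E → Finset V) (B0 : Set V) (L : List (E × V)) : Prop :=
  ∀ i (hi : i < L.length),
    (L.get ⟨i, hi⟩).2 ∈ edges (L.get ⟨i, hi⟩).1 ∧
    ∀ u, u ∈ edges (L.get ⟨i, hi⟩).1 → u ≠ (L.get ⟨i, hi⟩).2 →
      u ∈ B0 ∨ ∃ j, ∃ hj : j < L.length, j < i ∧ u = (L.get ⟨j, hj⟩).2

/-- The dual hypergraph: vertices are the hyperedges of `H`, and for each vertex
`v` of `H` there is a hyperedge `N(v) = {h : v ∈ h}`. -/
noncomputable def dualEdges [Fintype E] (edges : E → Finset V) (v : V) : Finset E :=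
  Finset.univ.filter (fun h => v ∈ edges h)

/-- `U` induces a subhypergraph all of whose hyperedges have cardinality `> 1`. -/
def GoodSet (edges : E → Finset V) (U : Finset V) : Prop :=
  ∀ h : E, ((edges h) ∩ U).Nonempty → 1 < ((edges h) ∩ U).card

/-- The vertex set of the core of `H`: the maximum induced subhypergraph all of
whose hyperedges have cardinality `> 1`. -/
noncomputable def coreSet [Fintype V] (edges : E → Finset V) : Finset V :=
  (Finset.univ : Finset V).powerset.sup (fun U => if GoodSet edges U then U else ∅)

/-- The zero forcing closure: a black vertex `u` with unique white neighbor `v`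
forces `v`. -/
inductive ZFClosure {α : Type*} (G : SimpleGraph α) (B : Set α) : α → Prop
  | init (v : α) : v ∈ B → ZFClosure G B v
  | force (u v : α) : ZFClosure G B u → G.Adj u v →
      (∀ w, G.Adj u w → w ≠ v → ZFClosure G B w) → ZFClosure G B v

def IsZeroForcingSet {α : Type*} (G : SimpleGraph α) (B : Set α) : Prop :=
  ∀ v, ZFClosure G B v

noncomputable def zeroForcingNumber {α : Type*} [Fintype α] (G : SimpleGraph α) : ℕ :=
  sInf {n | ∃ B : Finset α, B.card = n ∧ IsZeroForcingSet G ↑B}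

/-- The skew zero forcing closure: any vertex `u` (black or white) with a unique
white neighbor `v` forces `v`. -/
inductive SkewZFClosure {α : Type*} (G : SimpleGraph α) (B : Set α) : α → Prop
  | init (v : α) : v ∈ B → SkewZFClosure G B v
  | force (u v : α) : G.Adj u v →
      (∀ w, G.Adj u w → w ≠ v → SkewZFClosure G B w) → SkewZFClosure G B v

def IsSkewZeroForcingSet {α : Type*} (G : SimpleGraph α) (B : Set α) : Prop :=
  ∀ v, SkewZFClosure G B v

noncomputable def skewZeroForcingNumber {α : Type*} [Fintype α] (G : SimpleGraph α) : ℕ :=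
  sInf {n | ∃ B : Finset α, B.card = n ∧ IsSkewZeroForcingSet G ↑B}

/-- The incidence (Levi) graph of a hypergraph. -/
def incidenceGraph (edges : E → Finset V) : SimpleGraph (V ⊕ E) where
  Adj x y := (∃ v h, x = Sum.inl v ∧ y = Sum.inr h ∧ v ∈ edges h) ∨
             (∃ v h, x = Sum.inr h ∧ y = Sum.inl v ∧ v ∈ edges h)
  symm := by
    constructor
    rintro x y (⟨v, h, rfl, rfl, hm⟩ | ⟨v, h, rfl, rfl, hm⟩)
    · exact Or.inr ⟨v, h, rfl, rfl, hm⟩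
    · exact Or.inl ⟨v, h, rfl, rfl, hm⟩
  loopless := by
    constructor
    rintro x (⟨v, h, h1, h2, _⟩ | ⟨v, h, h1, h2, _⟩) <;> subst h1 <;> simp_all

/-- The star `K_{1,j}` with center `0`. -/
def starGraph (j : ℕ) : SimpleGraph (Fin (j + 1)) where
  Adj a b := a ≠ b ∧ (a = 0 ∨ b = 0)
  symm := ⟨fun _ _ ⟨hne, hor⟩ => ⟨hne.symm, hor.symm⟩⟩
  loopless := ⟨fun _ ha => ha.1 rfl⟩

end Defs

/-! Lazy burning sets and `C`-matchings are complementary. Given a `C`-matching, burn every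
unmatched vertex: the matched vertices then burn from last to first, `vᵢ` through `hᵢ`, whose
other vertices are unmatched or matched later. Conversely, listing the vertices outside a lazy
burning set `B` in an order in which they burn, each with a hyperedge that burns it, gives a
`C`-matching of length `|V| - |B|`. -/

namespace Burns

variable {V E : Type*} {edges : E → Finset V}

theorem mono {B B' : Set V} (hBB' : B ⊆ B') {v : V} (hv : Burns edges B v) :
    Burns edges B' v := by
  induction hv with
  | init v hv => exact .init v (hBB' hv)
  | spread h v hv _ ih => exact .spread h v hv ih

theorem trans {B B' : Set V} {v : V} (hv : Burns edges B' v) (hB' : ∀ u ∈ B', Burns edges B u) :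
    Burns edges B v := by
  induction hv with
  | init v hv => exact hB' v hv
  | spread h v hv _ ih => exact .spread h v hv ih

theorem exists_spread_of_notMem {B : Set V} {w : V} (hw : Burns edges B w) (hwB : w ∉ B) :
    ∃ h v, v ∉ B ∧ v ∈ edges h ∧ ∀ u ∈ edges h, u ≠ v → u ∈ B := by
  induction hw with
  | init v hv => exact absurd hv hwB
  | spread h v hv _ ih =>
    by_cases hall : ∀ u ∈ edges h, u ≠ v → u ∈ B
    · exact ⟨h, v, hwB, hv, hall⟩
    · push Not at hall
      obtain ⟨u, hu, huv, huB⟩ := hall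
      exact ih u hu huv huB

end Burns

section CMatching

variable {V E : Type*} {edges : E → Finset V}

theorem isCMatching_iff_pairwise {L : List (V × E)} :
    IsCMatching edges L ↔ (∀ p ∈ L, p.1 ∈ edges p.2) ∧ (L.map Prod.fst).Nodup ∧
      L.Pairwise (fun p q => q.1 ∉ edges p.2) := by
  rw [IsCMatching, List.pairwise_iff_get]
  exact and_congr_right' <| and_congr_right' ⟨fun h i j hij => h i j i.2 j.2 hij,
    fun h i j hi hj hij => h ⟨i, hi⟩ ⟨j, hj⟩ hij⟩

theorem isCMatching_nil : IsCMatching edges ([] : List (V × E)) := by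
  simp [isCMatching_iff_pairwise]

theorem isCMatching_cons {v : V} {h : E} {L : List (V × E)} :
    IsCMatching edges ((v, h) :: L) ↔ v ∈ edges h ∧ v ∉ L.map Prod.fst ∧
      (∀ p ∈ L, p.1 ∉ edges h) ∧ IsCMatching edges L := by
  simp only [isCMatching_iff_pairwise, List.forall_mem_cons, List.map_cons, List.nodup_cons,
    List.pairwise_cons]
  tauto

theorem IsCMatching.length_le_card [Fintype V] {L : List (V × E)} (hL : IsCMatching edges L) :
    L.length ≤ Fintype.card V := by
  simpa using hL.2.1.length_le_card

theorem IsCMatching.isLazyBurningSet {L : List (V × E)} (hL : IsCMatching edges L) :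
    IsLazyBurningSet edges {v | v ∉ L.map Prod.fst} := by
  induction L with
  | nil => exact fun v => .init v (by simp)
  | cons p L ih =>
    obtain ⟨v, h⟩ := p
    obtain ⟨hvh, -, hhL, hL⟩ := isCMatching_cons.mp hL
    have hv : Burns edges {u | u ∉ ((v, h) :: L).map Prod.fst} v := by
      refine .spread h v hvh fun u hu huv => .init u ?_
      simpa [huv] using fun e he => hhL (u, e) he hu
    intro w
    refine (ih hL w).trans fun u hu => ?_
    by_cases huv : u = v
    · exact huv ▸ hv
    · exact .init u (by simpa [huv] using hu)

theorem IsLazyBurningSet.exists_isCMatching [Fintype V] {B : Finset V}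
    (hB : IsLazyBurningSet edges ↑B) :
    ∃ L : List (V × E), IsCMatching edges L ∧ (∀ p ∈ L, p.1 ∉ B) ∧
      L.length + B.card = Fintype.card V := by
  by_cases hBuniv : B = Finset.univ
  · exact ⟨[], isCMatching_nil, by simp, by simp [hBuniv]⟩
  obtain ⟨w, hwB⟩ : ∃ w, w ∉ B := by simpa [Finset.eq_univ_iff_forall] using hBuniv
  obtain ⟨h, v, hvB, hvh, hh⟩ := (hB w).exists_spread_of_notMem (by simpa using hwB)
  have hvB : v ∉ B := by simpa using hvB
  have hB' : IsLazyBurningSet edges ↑(insert v B) := fun u =>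
    (hB u).mono (by simp [Set.subset_insert])
  obtain ⟨L, hL, hLB, hlen⟩ := hB'.exists_isCMatching
  have hLB' : ∀ p ∈ L, p.1 ≠ v ∧ p.1 ∉ B := fun p hp => by simpa using hLB p hp
  refine ⟨(v, h) :: L, isCMatching_cons.mpr ⟨hvh, ?_, ?_, hL⟩, ?_, ?_⟩
  · simpa using fun e hve => (hLB' (v, e) hve).1 rfl
  · exact fun p hp hph => (hLB' p hp).2 (by simpa using hh p.1 hph (hLB' p hp).1)
  · exact List.forall_mem_cons.mpr ⟨hvB, fun p hp => (hLB' p hp).2⟩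
  · rw [Finset.card_insert_of_notMem hvB] at hlen
    simp only [List.length_cons]
    omega
termination_by Bᶜ.card
decreasing_by exact Finset.card_lt_card (compl_lt_compl_iff_lt.mpr (Finset.ssubset_insert hvB))

theorem lazyBurningNumber_le [Fintype V] {B : Finset V} (hB : IsLazyBurningSet edges ↑B) :
    lazyBurningNumber edges ≤ B.card :=
  Nat.sInf_le ⟨B, rfl, hB⟩

theorem exists_isLazyBurningSet_card_eq_lazyBurningNumber [Fintype V] :
    ∃ B : Finset V, B.card = lazyBurningNumber edges ∧ IsLazyBurningSet edges ↑B :=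
  Nat.sInf_mem (s := {n | ∃ B : Finset V, B.card = n ∧ IsLazyBurningSet edges ↑B})
    ⟨_, Finset.univ, rfl, fun v => .init v (Finset.mem_coe.mpr (Finset.mem_univ v))⟩

theorem bddAbove_cMatching_lengths [Fintype V] :
    BddAbove {k | ∃ L : List (V × E), IsCMatching edges L ∧ L.length = k} :=
  ⟨Fintype.card V, by rintro _ ⟨L, hL, rfl⟩; exact hL.length_le_card⟩

theorem IsCMatching.length_le_maxCMatching [Fintype V] {L : List (V × E)}
    (hL : IsCMatching edges L) : L.length ≤ maxCMatching edges :=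
  le_csSup bddAbove_cMatching_lengths ⟨L, hL, rfl⟩

theorem exists_isCMatching_length_eq_maxCMatching [Fintype V] :
    ∃ L : List (V × E), IsCMatching edges L ∧ L.length = maxCMatching edges :=
  Nat.sSup_mem (s := {k | ∃ L : List (V × E), IsCMatching edges L ∧ L.length = k})
    ⟨0, [], isCMatching_nil, rfl⟩ bddAbove_cMatching_lengths

end CMatching

theorem stmt2 {V E : Type*} [Fintype V] (edges : E → Finset V) :
    lazyBurningNumber edges = Fintype.card V - maxCMatching edges := by
  apply le_antisymm
  · obtain ⟨M, hM, hMlen⟩ := exists_isCMatching_length_eq_maxCMatching (edges := edges)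
    have hcard : (M.map Prod.fst).toFinsetᶜ.card = Fintype.card V - maxCMatching edges := by
      rw [Finset.card_compl, List.toFinset_card_of_nodup hM.2.1, List.length_map, hMlen]
    refine hcard ▸ lazyBurningNumber_le ?_
    simpa [Set.compl_def] using hM.isLazyBurningSet
  · obtain ⟨B, hBcard, hB⟩ := exists_isLazyBurningSet_card_eq_lazyBurningNumber (edges := edges)
    obtain ⟨L, hL, -, hlen⟩ := hB.exists_isCMatching
    have := hL.length_le_maxCMatching
    omega
end

section
/- If H is a hypergraph with no isolated vertices and maximum hyperedge cardinality \overline{\Delta}, then b_L(H) \le |V(H)| - \lceil |V(H)|/\overline{\Delta} \rceil. -/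
open scoped Classical

/-!
Choose for every vertex `v` a hyperedge `g v ∋ v`. Greedily pick vertices `s₁, s₂, …`, each
outside `g s₁ ∪ … ∪ g sᵢ₋₁`, until these hyperedges cover `V`. Burning everything except the
`sᵢ`, the vertex `sᵢ` burns through `g sᵢ` in the order of choice, since `g sᵢ` contains no
later `sⱼ`. As the at most `Δ'`-element hyperedges `g sᵢ` cover `V`, there are at least
`⌈|V| / Δ'⌉` vertices `sᵢ`.
-/

theorem Nat.add_sub_one_div_le_of_le_mul {n k d : ℕ} (h : n ≤ k * d) : (n + d - 1) / d ≤ k := by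
  rcases Nat.eq_zero_or_pos d with rfl | hd
  · simp
  · rw [Nat.div_le_iff_le_mul_add_pred hd]
    rw [Nat.mul_comm] at h
    omega

section LazyBurning

variable {V E : Type*}

theorem Burns.mono_s11 {edges : E → Finset V} {B B' : Set V} (hBB' : B ⊆ B') {v : V}
    (hv : Burns edges B v) : Burns edges B' v := by
  induction hv with
  | init v hv => exact .init v (hBB' hv)
  | spread h v hvh _ ih => exact .spread h v hvh ih

theorem lazyBurningNumber_le_card [Fintype V] {edges : E → Finset V} {B : Finset V}
    (hB : IsLazyBurningSet edges ↑B) : lazyBurningNumber edges ≤ B.card :=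
  Nat.sInf_le ⟨B, rfl, hB⟩

section GreedyCover

variable (edges : E → Finset V) (g : V → E)

noncomputable def chosenEdgesUnion (S : Finset V) : Finset V :=
  S.biUnion fun s => edges (g s)

variable {edges g}

theorem subset_chosenEdgesUnion (hg : ∀ v, v ∈ edges (g v)) (S : Finset V) :
    S ⊆ chosenEdgesUnion edges g S :=
  fun s hs => Finset.mem_biUnion.mpr ⟨s, hs, hg s⟩

/-- As `a` lies outside the old union, the old initial set stays inside the new one; `a` then
burns last, through `g a`. -/
theorem burns_chosenEdgesUnion_insert (hg : ∀ v, v ∈ edges (g v)) {S : Finset V} {a : V}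
    (ha : a ∉ chosenEdgesUnion edges g S)
    (hS : ∀ v ∈ chosenEdgesUnion edges g S,
      Burns edges ↑(chosenEdgesUnion edges g S \ S) v) :
    ∀ v ∈ chosenEdgesUnion edges g (insert a S),
      Burns edges ↑(chosenEdgesUnion edges g (insert a S) \ insert a S) v := by
  set D := chosenEdgesUnion edges g S
  set D' := chosenEdgesUnion edges g (insert a S)
  have hD' : D' = edges (g a) ∪ D := Finset.biUnion_insert
  have hSD : S ⊆ D := subset_chosenEdgesUnion hg S
  have hinit : D \ S ⊆ D' \ insert a S := by
    intro u hu
    obtain ⟨huD, huS⟩ := Finset.mem_sdiff.mp hu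
    simp only [hD', Finset.mem_sdiff, Finset.mem_union, Finset.mem_insert, not_or]
    exact ⟨Or.inr huD, fun hua => ha (hua ▸ huD), huS⟩
  have hburns : ∀ u ∈ D', u ≠ a → Burns edges ↑(D' \ insert a S) u := by
    intro u hu hua
    by_cases huS : u ∈ S
    · exact (hS u (hSD huS)).mono_s11 (by exact_mod_cast hinit)
    · exact .init u (by simp [hu, hua, huS])
  intro v hv
  by_cases hva : v = a
  · subst hva
    exact .spread (g v) v (hg v) fun u hu hne => hburns u (hD' ▸ Finset.mem_union_left _ hu) hne
  · exact hburns v hv hva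

theorem exists_burning_chosenEdgesUnion (hg : ∀ v, v ∈ edges (g v)) (C : Finset V) :
    ∃ S : Finset V, C ⊆ chosenEdgesUnion edges g S ∧
      ∀ v ∈ chosenEdgesUnion edges g S, Burns edges ↑(chosenEdgesUnion edges g S \ S) v := by
  induction C using Finset.induction_on with
  | empty => exact ⟨∅, Finset.empty_subset _, by simp [chosenEdgesUnion]⟩
  | insert a C _ ih =>
    obtain ⟨S, hCS, hS⟩ := ih
    by_cases ha : a ∈ chosenEdgesUnion edges g S
    · exact ⟨S, Finset.insert_subset ha hCS, hS⟩
    · refine ⟨insert a S, Finset.insert_subset ?_ ?_, burns_chosenEdgesUnion_insert hg ha hS⟩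
      · exact subset_chosenEdgesUnion hg _ (Finset.mem_insert_self a S)
      · exact hCS.trans (Finset.biUnion_subset_biUnion_of_subset_left _
          (Finset.subset_insert a S))

theorem card_chosenEdgesUnion_le {Δ' : ℕ} (hcard : ∀ h : E, (edges h).card ≤ Δ')
    (S : Finset V) : (chosenEdgesUnion edges g S).card ≤ S.card * Δ' :=
  Finset.card_biUnion_le_card_mul _ _ _ fun s _ => hcard (g s)

end GreedyCover

end LazyBurning

theorem stmt11 {V E : Type*} [Fintype V] (edges : E → Finset V) (Δ' : ℕ)
    (hiso : ∀ v : V, ∃ h : E, v ∈ edges h)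
    (hcard : ∀ h : E, (edges h).card ≤ Δ') :
    lazyBurningNumber edges ≤ Fintype.card V - (Fintype.card V + Δ' - 1) / Δ' := by
  choose g hg using hiso
  obtain ⟨S, hcover, hburns⟩ := exists_burning_chosenEdgesUnion hg Finset.univ
  have hunion : chosenEdgesUnion edges g S = Finset.univ := Finset.univ_subset_iff.mp hcover
  rw [hunion] at hburns
  have hS : (Fintype.card V + Δ' - 1) / Δ' ≤ S.card :=
    Nat.add_sub_one_div_le_of_le_mul <| by
      simpa [hunion] using card_chosenEdgesUnion_le (g := g) hcard S
  calc lazyBurningNumber edges ≤ (Finset.univ \ S).card :=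
        lazyBurningNumber_le_card fun v => hburns v (Finset.mem_univ v)
    _ = Fintype.card V - S.card := by rw [Finset.card_univ_sdiff]
    _ ≤ Fintype.card V - (Fintype.card V + Δ' - 1) / Δ' := Nat.sub_le_sub_left hS _
end

section
/- Let G be a graph and B \subseteq V(G). Then B is a skew zero forcing set for G if and only if B is a lazy burning set for the open neighborhood hypergraph \mathcal{N}(G). In particular, z_0(G) = b_L(\mathcal{N}(G)). -/
open scoped Classical

section SkewForcingAsBurning

variable {α : Type*} (G : SimpleGraph α) [G.LocallyFinite]

theorem skewZFClosure_iff_burns_neighborFinset (B : Set α) (v : α) :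
    SkewZFClosure G B v ↔ Burns (fun v => G.neighborFinset v) B v := by
  constructor
  · intro h
    induction h with
    | init v hv => exact .init v hv
    | force u v hadj _ ih =>
      exact .spread u v ((G.mem_neighborFinset u v).2 hadj) fun w hw hne =>
        ih w ((G.mem_neighborFinset u w).1 hw) hne
  · intro h
    induction h with
    | init v hv => exact .init v hv
    | spread u v hv _ ih =>
      exact .force u v ((G.mem_neighborFinset u v).1 hv) fun w hw hne =>
        ih w ((G.mem_neighborFinset u w).2 hw) hne

theorem isSkewZeroForcingSet_iff_isLazyBurningSet (B : Set α) :
    IsSkewZeroForcingSet G B ↔ IsLazyBurningSet (fun v => G.neighborFinset v) B :=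
  forall_congr' (skewZFClosure_iff_burns_neighborFinset G B)

theorem skewZeroForcingNumber_eq_lazyBurningNumber [Fintype α] :
    skewZeroForcingNumber G = lazyBurningNumber (fun v => G.neighborFinset v) := by
  unfold skewZeroForcingNumber lazyBurningNumber
  simp only [isSkewZeroForcingSet_iff_isLazyBurningSet]

end SkewForcingAsBurning

theorem stmt18 {α : Type*} [Fintype α] (G : SimpleGraph α) [DecidableRel G.Adj] (B : Set α) :
    (IsSkewZeroForcingSet G B ↔ IsLazyBurningSet (fun v => G.neighborFinset v) B) ∧
    skewZeroForcingNumber G = lazyBurningNumber (fun v => G.neighborFinset v) :=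
  ⟨isSkewZeroForcingSet_iff_isLazyBurningSet G B, skewZeroForcingNumber_eq_lazyBurningNumber G⟩
end
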